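/- arXiv:2012.13295 — 6 statements merged into one kernel-verified Lean document; each statement's English description precedes it below -/
import Mathlib

section
/- Let k > 0 and let ψ_k be the Huber score function ψ_k(x) = max(−k, min(x, k)). Suppose the real random variable ε has a law that is absolutely continuous with respect to Lebesgue measure, with density f satisfying f(−x) = f(x) for almost every x. Then E[ψ_k(ε)] = 0 and the map t ↦ E[ψ_k(ε + t)] is differentiable at t = 0 with derivative F(k) − F(−k) = 2F(k) − 1, where F(x) = P(ε ≤ x) is the cumulative distribution function of ε. -/
open MeasureTheory Filter Topology

/-- The Huber score function. -/
def huberPsi (k x : ℝ) : ℝ := max (-k) (min x k)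

lemma huberPsi_cont (k : ℝ) : Continuous (huberPsi k) :=
  continuous_const.max (continuous_id.min continuous_const)

lemma huberPsi_lip (k : ℝ) : LipschitzWith 1 (huberPsi k) :=
  (LipschitzWith.id.min_const k).const_max (-k)

lemma huberPsi_abs_le {k : ℝ} (hk : 0 < k) (x : ℝ) : |huberPsi k x| ≤ k := by
  rw [abs_le]
  exact ⟨le_max_left _ _, max_le (by linarith) (min_le_right _ _)⟩

lemma huberPsi_odd {k : ℝ} (hk : 0 < k) (x : ℝ) : huberPsi k (-x) = - huberPsi k x := by
  unfold huberPsi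
  simp only [max_def, min_def]
  split_ifs <;> linarith

/-- For the Huber score `ψ_k(x) = max(−k, min(x, k))` with `k > 0`, if `ε` has a
Lebesgue density `f` that is (a.e.) symmetric, then `E[ψ_k(ε)] = 0` and `t ↦ E[ψ_k(ε + t)]` is
differentiable at `0` with derivative `F(k) − F(−k) = 2F(k) − 1`, where `F` is the cdf of `ε`. -/
theorem huber_score_linearization
    {Ω : Type*} [MeasurableSpace Ω] (μ : Measure Ω) [IsProbabilityMeasure μ]
    (k : ℝ) (hk : 0 < k)
    (ε : Ω → ℝ) (hε : Measurable ε)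
    (f : ℝ → ℝ) (hfmeas : Measurable f)
    (hf0 : ∀ᵐ x ∂(volume : Measure ℝ), 0 ≤ f x)
    (hlaw : μ.map ε = (volume : Measure ℝ).withDensity (fun x => ENNReal.ofReal (f x)))
    (hsym : ∀ᵐ x ∂(volume : Measure ℝ), f (-x) = f x)
    (F : ℝ → ℝ) (hF : ∀ x : ℝ, F x = (μ {ω | ε ω ≤ x}).toReal) :
    (∫ ω, max (-k) (min (ε ω) k) ∂μ) = 0 ∧
    HasDerivAt (fun t : ℝ => ∫ ω, max (-k) (min (ε ω + t) k) ∂μ) (F k - F (-k)) 0 ∧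
    F k - F (-k) = 2 * F k - 1 := by
  set ν : Measure ℝ := μ.map ε with hν
  have hνprob : IsProbabilityMeasure ν := Measure.isProbabilityMeasure_map hε.aemeasurable
  have hνac : ν ≪ (volume : Measure ℝ) := by
    rw [hlaw]; exact withDensity_absolutelyContinuous _ _
  -- symmetry of ν under negation
  have hmapneg : ν.map (fun x : ℝ => -x) = ν := by
    ext s hs
    rw [Measure.map_apply measurable_neg hs, hlaw,
      withDensity_apply _ (measurable_neg hs), withDensity_apply _ hs,
      ← lintegral_indicator (measurable_neg hs), ← lintegral_indicator hs]
    have hrw : (fun x => ((fun y : ℝ => -y) ⁻¹' s).indicator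
        (fun y => ENNReal.ofReal (f y)) x)
        = fun x => (s.indicator (fun y => ENNReal.ofReal (f (-y)))) (-x) := by
      funext x
      by_cases hx : -x ∈ s <;> simp [Set.indicator, hx]
    rw [hrw]
    have hmeasF : Measurable (s.indicator (fun z => ENNReal.ofReal (f (-z)))) :=
      ((hfmeas.comp measurable_neg).ennreal_ofReal).indicator hs
    have hcomp : (∫⁻ x, s.indicator (fun z => ENNReal.ofReal (f (-z))) (-x) ∂(volume : Measure ℝ))
        = ∫⁻ y, s.indicator (fun z => ENNReal.ofReal (f (-z))) y ∂(volume : Measure ℝ) :=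
      (Measure.measurePreserving_neg _).lintegral_comp hmeasF
    rw [hcomp]
    refine lintegral_congr_ae ?_
    filter_upwards [hsym] with x hx
    by_cases hxs : x ∈ s <;> simp [Set.indicator, hxs, hx]
  -- transfer of integrals
  have hmeas_t : ∀ t : ℝ, AEStronglyMeasurable (fun x : ℝ => huberPsi k (x + t)) ν :=
    fun t => ((huberPsi_cont k).comp (continuous_id.add continuous_const)).aestronglyMeasurable
  have transfer : ∀ t : ℝ, (∫ ω, huberPsi k (ε ω + t) ∂μ) = ∫ x, huberPsi k (x + t) ∂ν := by
    intro t
    rw [hν, integral_map hε.aemeasurable (hmeas_t t)]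
  -- the cdf via ν
  have hFν : ∀ x : ℝ, F x = (ν (Set.Iic x)).toReal := by
    intro x
    rw [hF, hν, Measure.map_apply hε measurableSet_Iic]
    rfl
  have hsingle : ∀ x : ℝ, ν {x} = 0 := fun x => hνac Real.volume_singleton
  -- Part 1
  have part1 : (∫ x, huberPsi k x ∂ν) = 0 := by
    have h1 : (∫ x, huberPsi k x ∂ν) = ∫ x, huberPsi k (-x) ∂ν := by
      conv_lhs => rw [← hmapneg]
      rw [integral_map measurable_neg.aemeasurable (huberPsi_cont k).aestronglyMeasurable]
    have h2 : (∫ x, huberPsi k (-x) ∂ν) = - ∫ x, huberPsi k x ∂ν := by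
      simp_rw [huberPsi_odd hk]
      exact integral_neg _
    rw [h2] at h1
    linarith
  -- measure identities
  have hIoo : ν (Set.Ioo (-k) k) = ν (Set.Ioc (-k) k) := by
    rw [← Set.Ioc_sdiff_right]
    exact measure_diff_null (hsingle k)
  have hsplit : ν (Set.Iic (-k)) + ν (Set.Ioc (-k) k) = ν (Set.Iic k) := by
    rw [← measure_union (Set.Iic_disjoint_Ioc le_rfl) measurableSet_Ioc,
      Set.Iic_union_Ioc_eq_Iic (by linarith)]
  have hdiff_eq : F k - F (-k) = (ν (Set.Ioo (-k) k)).toReal := by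
    rw [hFν, hFν, hIoo, ← hsplit,
      ENNReal.toReal_add (measure_ne_top _ _) (measure_ne_top _ _)]
    ring
  -- Part 3 : F k + F (-k) = 1
  have hnegIic : ν (Set.Iic (-k)) = ν (Set.Ici k) := by
    conv_rhs => rw [← hmapneg]
    rw [Measure.map_apply measurable_neg measurableSet_Ici]
    congr 1
    ext x
    simp [le_neg]
  have hIci : ν (Set.Ici k) = ν (Set.Ioi k) := by
    rw [← Set.Ici_sdiff_left]
    exact (measure_diff_null (hsingle k)).symm
  have hpartition : ν (Set.Iic k) + ν (Set.Ioi k) = 1 := by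
    rw [← measure_union (by
        rw [Set.disjoint_left]
        intro x hx hx'
        simp only [Set.mem_Iic] at hx
        simp only [Set.mem_Ioi] at hx'
        linarith) measurableSet_Ioi,
      Set.Iic_union_Ioi, measure_univ]
  have hsum : F k + F (-k) = 1 := by
    rw [hFν, hFν, hnegIic, hIci]
    have h1 : ((ν (Set.Iic k)) + ν (Set.Ioi k)).toReal = 1 := by
      rw [hpartition]; simp
    rw [ENNReal.toReal_add (measure_ne_top _ _) (measure_ne_top _ _)] at h1
    linarith
  -- Part 2 : derivative
  have hd : HasDerivAt (fun t : ℝ => ∫ x, huberPsi k (x + t) ∂ν)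
      ((ν (Set.Ioo (-k) k)).toReal) 0 := by
    have hnull : ν ({-k, k} : Set ℝ) = 0 := by
      apply hνac
      exact Set.Finite.measure_zero ((Set.finite_singleton k).insert (-k)) _
    have hae : ∀ᵐ x ∂ν, x ≠ -k ∧ x ≠ k := by
      have h0 : ∀ᵐ x ∂ν, x ∉ ({-k, k} : Set ℝ) := measure_eq_zero_iff_ae_notMem.mp hnull
      filter_upwards [h0] with x hx
      simpa [Set.mem_insert_iff, Set.mem_singleton_iff, not_or] using hx
    have main := hasDerivAt_integral_of_dominated_loc_of_lip
      (μ := ν) (F := fun t x => huberPsi k (x + t))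
      (F' := (Set.Ioo (-k) k).indicator (fun _ => (1:ℝ))) (x₀ := (0:ℝ))
      (bound := fun _ => (1:ℝ)) (s := Metric.ball 0 1) (Metric.ball_mem_nhds _ one_pos)
      (Eventually.of_forall fun t => hmeas_t t)
      ?_ ?_ ?_ (integrable_const 1) ?_
    · have h2 := main.2
      rwa [integral_indicator_const _ measurableSet_Ioo, smul_eq_mul, mul_one] at h2
    · -- integrability at 0
      refine (integrable_const k).mono' (hmeas_t 0) (ae_of_all _ fun x => ?_)
      rw [Real.norm_eq_abs]
      exact huberPsi_abs_le hk _
    · exact (measurable_const.indicator measurableSet_Ioo).aestronglyMeasurable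
    · -- Lipschitz
      refine ae_of_all _ fun x => ?_
      have hadd : LipschitzWith 1 fun t : ℝ => x + t :=
        LipschitzWith.of_dist_le_mul fun a b => by rw [dist_add_left]; simp
      have hlip : LipschitzWith 1 fun t : ℝ => huberPsi k (x + t) := by
        have := (huberPsi_lip k).comp hadd
        rw [one_mul] at this
        exact this
      have h1 : Real.nnabs (1:ℝ) = 1 := by simp
      show LipschitzOnWith (Real.nnabs (1:ℝ)) (fun t : ℝ => huberPsi k (x + t)) (Metric.ball 0 1)
      rw [h1]
      exact hlip.lipschitzOnWith
    · -- a.e. differentiability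
      filter_upwards [hae] with x hx
      obtain ⟨hx1, hx2⟩ := hx
      rcases lt_or_gt_of_ne hx1 with h1 | h1
      · -- x < -k
        have hev : (fun t : ℝ => huberPsi k (x + t)) =ᶠ[𝓝 (0:ℝ)] fun _ => -k := by
          have hball : Set.Ioo (-(-k - x)) (-k - x) ∈ 𝓝 (0:ℝ) :=
            Ioo_mem_nhds (by linarith) (by linarith)
          filter_upwards [hball] with t ht
          obtain ⟨ht1, ht2⟩ := ht
          unfold huberPsi
          rw [min_eq_left (by linarith), max_eq_left (by linarith)]
        have hF'0 : (Set.Ioo (-k) k).indicator (fun _ => (1:ℝ)) x = 0 :=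
          Set.indicator_of_notMem (by
            simp only [Set.mem_Ioo, not_and, not_lt]
            intro h
            linarith) _
        rw [hF'0]
        exact (hasDerivAt_const (0:ℝ) (-k)).congr_of_eventuallyEq hev
      rcases lt_or_gt_of_ne hx2 with h2 | h2
      · -- -k < x < k
        have hev : (fun t : ℝ => huberPsi k (x + t)) =ᶠ[𝓝 (0:ℝ)] fun t => x + t := by
          have hball : Set.Ioo (-k - x) (k - x) ∈ 𝓝 (0:ℝ) :=
            Ioo_mem_nhds (by linarith) (by linarith)
          filter_upwards [hball] with t ht
          obtain ⟨ht1, ht2⟩ := ht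
          unfold huberPsi
          rw [min_eq_left (by linarith), max_eq_right (by linarith)]
        have hF'1 : (Set.Ioo (-k) k).indicator (fun _ => (1:ℝ)) x = 1 :=
          Set.indicator_of_mem (Set.mem_Ioo.mpr ⟨h1, h2⟩) _
        rw [hF'1]
        exact ((hasDerivAt_id (0:ℝ)).const_add x).congr_of_eventuallyEq hev
      · -- k < x
        have hev : (fun t : ℝ => huberPsi k (x + t)) =ᶠ[𝓝 (0:ℝ)] fun _ => k := by
          have hball : Set.Ioo (-(x - k)) (x - k) ∈ 𝓝 (0:ℝ) :=
            Ioo_mem_nhds (by linarith) (by linarith)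
          filter_upwards [hball] with t ht
          obtain ⟨ht1, ht2⟩ := ht
          unfold huberPsi
          rw [min_eq_right (by linarith), max_eq_right (by linarith)]
        have hF'0 : (Set.Ioo (-k) k).indicator (fun _ => (1:ℝ)) x = 0 :=
          Set.indicator_of_notMem (by
            simp only [Set.mem_Ioo, not_and, not_lt]
            intro h
            linarith) _
        rw [hF'0]
        exact (hasDerivAt_const (0:ℝ) k).congr_of_eventuallyEq hev
  refine ⟨?_, ?_, by linarith⟩
  · show (∫ ω, huberPsi k (ε ω) ∂μ) = 0
    have h0 := transfer 0
    simp only [add_zero] at h0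
    rw [h0, part1]
  · show HasDerivAt (fun t : ℝ => ∫ ω, huberPsi k (ε ω + t) ∂μ) (F k - F (-k)) 0
    rw [hdiff_eq]
    have hfun : (fun t : ℝ => ∫ ω, huberPsi k (ε ω + t) ∂μ)
        = fun t : ℝ => ∫ x, huberPsi k (x + t) ∂ν := funext transfer
    rw [hfun]
    exact hd
end

section
/- Fix q ∈ (1, 2) and let ψ_q(x) = q·|x|^{q−1}·sign(x) be the score function of the loss ρ_q(x) = |x|^q. Suppose the real random variable ε has a law symmetric about 0 (i.e., ε and −ε have the same distribution), P(ε = 0) = 0, E[|ε|^{q−1}] < ∞ and E[|ε|^{q−2}] < ∞. Then ψ_q(ε + t) is integrable for every t ∈ ℝ, E[ψ_q(ε)] = 0, and the map t ↦ E[ψ_q(ε + t)] is differentiable at t = 0 with derivative q(q−1)·E[|ε|^{q−2}]. -/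
open MeasureTheory Filter Topology



lemma Lq_sign_measurable : Measurable Real.sign := by
  have h : Real.sign = fun r : ℝ => if r < 0 then (-1:ℝ) else if 0 < r then 1 else 0 := rfl
  rw [h]
  exact Measurable.ite measurableSet_Iio measurable_const
    (Measurable.ite measurableSet_Ioi measurable_const measurable_const)

lemma Lq_psi_measurable {q : ℝ} (hq1 : 1 < q) :
    Measurable fun y : ℝ => q * |y| ^ (q - 1) * Real.sign y := by
  have hc : Continuous fun y : ℝ => |y| ^ (q - 1) :=
    continuous_abs.rpow_const (fun y => Or.inr (by linarith))
  exact ((measurable_const.mul hc.measurable).mul Lq_sign_measurable)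

lemma Lq_psi_abs_le {q : ℝ} (hq0 : 0 ≤ q) (y : ℝ) :
    |q * |y| ^ (q - 1) * Real.sign y| ≤ q * |y| ^ (q - 1) := by
  have h1 : 0 ≤ q * |y| ^ (q - 1) := by positivity
  rw [abs_mul, abs_of_nonneg h1]
  have : |Real.sign y| ≤ 1 := by
    rcases Real.sign_apply_eq y with h | h | h <;> rw [h] <;> norm_num
  exact mul_le_of_le_one_right h1 this

lemma Lq_hasDerivAt_psi {q : ℝ} (hq1 : 1 < q) {x : ℝ} (hx : x ≠ 0) :
    HasDerivAt (fun y : ℝ => q * |y| ^ (q - 1) * Real.sign y)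
      (q * (q - 1) * |x| ^ (q - 2)) x := by
  rcases hx.lt_or_gt with h | h
  · -- x < 0
    have h1 : HasDerivAt (fun y : ℝ => (-y) ^ (q - 1))
        ((q - 1) * (-x) ^ (q - 1 - 1) * (-1)) x :=
      (Real.hasDerivAt_rpow_const (x := -x) (p := q - 1)
        (Or.inl (neg_ne_zero.mpr hx))).comp x (hasDerivAt_neg x)
    have h2 : HasDerivAt (fun y : ℝ => -(q * (-y) ^ (q - 1)))
        (q * (q - 1) * |x| ^ (q - 2)) x := by
      have := (h1.const_mul q).neg
      refine this.congr_deriv ?_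
      rw [abs_of_neg h]
      ring_nf
    refine h2.congr_of_eventuallyEq ?_
    filter_upwards [Iio_mem_nhds h] with y hy
    rw [Real.sign_of_neg hy, abs_of_neg hy]
    ring
  · -- 0 < x
    have h1 : HasDerivAt (fun y : ℝ => q * y ^ (q - 1))
        (q * (q - 1) * |x| ^ (q - 2)) x := by
      have := (Real.hasDerivAt_rpow_const (x := x) (p := q - 1) (Or.inl hx)).const_mul q
      refine this.congr_deriv ?_
      rw [abs_of_pos h]
      ring_nf
    refine h1.congr_of_eventuallyEq ?_
    filter_upwards [Ioi_mem_nhds h] with y hy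
    rw [Real.sign_of_pos hy, abs_of_pos hy]
    ring


-- antitone estimate: for 0 < |x| ≤ 2a, a^(q-2) ≤ 2 |x|^(q-2)
lemma Lq_anti {q : ℝ} (hq1 : 1 < q) (hq2 : q < 2) {x a : ℝ} (hx : x ≠ 0)
    (ha : |x| / 2 ≤ a) : a ^ (q - 2) ≤ 2 * |x| ^ (q - 2) := by
  have habs : 0 < |x| := abs_pos.mpr hx
  have h1 : a ^ (q - 2) ≤ (|x| / 2) ^ (q - 2) :=
    Real.rpow_le_rpow_of_nonpos (by positivity) ha (by linarith)
  have h2 : (|x| / 2) ^ (q - 2) = |x| ^ (q - 2) * ((2:ℝ) ^ (q - 2))⁻¹ := by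
    rw [div_eq_mul_inv, Real.mul_rpow (abs_nonneg x) (by positivity),
      Real.inv_rpow (by norm_num : (0:ℝ) ≤ 2)]
  have h3 : ((2:ℝ) ^ (q - 2))⁻¹ = (2:ℝ) ^ (2 - q) := by
    rw [← Real.rpow_neg (by norm_num)]; ring_nf
  have h4 : (2:ℝ) ^ (2 - q) ≤ 2 := by
    calc (2:ℝ) ^ (2 - q) ≤ (2:ℝ) ^ (1:ℝ) :=
          Real.rpow_le_rpow_of_exponent_le one_le_two (by linarith)
      _ = 2 := Real.rpow_one 2
  calc a ^ (q - 2) ≤ |x| ^ (q - 2) * ((2:ℝ) ^ (q - 2))⁻¹ := h2 ▸ h1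
    _ ≤ |x| ^ (q - 2) * 2 := by
        rw [h3]
        exact mul_le_mul_of_nonneg_left h4 (Real.rpow_nonneg (abs_nonneg x) _)
    _ = 2 * |x| ^ (q - 2) := by ring


lemma Lq_key {q : ℝ} (hq1 : 1 < q) (hq2 : q < 2) {x : ℝ} (t : ℝ) (hx : x ≠ 0) :
    |q * |x + t| ^ (q - 1) * Real.sign (x + t) - q * |x| ^ (q - 1) * Real.sign x|
      ≤ 12 * q * |x| ^ (q - 2) * |t| := by
  have hq0 : (0:ℝ) < q := by linarith
  have habs : 0 < |x| := abs_pos.mpr hx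
  have hxq2 : 0 ≤ |x| ^ (q - 2) := Real.rpow_nonneg (abs_nonneg x) _
  by_cases hcase : |x| ≤ 2 * |t|
  · -- small x case
    have ht : 0 < |t| := by linarith
    have hsplit : ∀ a : ℝ, 0 < a → a ^ (q - 1) = a * a ^ (q - 2) := by
      intro a ha
      rw [show q - 1 = 1 + (q - 2) by ring, Real.rpow_add ha, Real.rpow_one]
    have htq2 : |t| ^ (q - 2) ≤ 2 * |x| ^ (q - 2) :=
      Lq_anti hq1 hq2 hx (by linarith)
    have e1 : |x + t| ^ (q - 1) ≤ 6 * (|x| ^ (q - 2) * |t|) := by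
      calc |x + t| ^ (q - 1) ≤ (3 * |t|) ^ (q - 1) := by
            apply Real.rpow_le_rpow (abs_nonneg _) _ (by linarith)
            calc |x + t| ≤ |x| + |t| := abs_add_le x t
              _ ≤ 3 * |t| := by linarith
        _ = (3:ℝ) ^ (q - 1) * |t| ^ (q - 1) := Real.mul_rpow (by norm_num) (abs_nonneg t)
        _ ≤ 3 * (|t| * (2 * |x| ^ (q - 2))) := by
            apply mul_le_mul
            · calc (3:ℝ) ^ (q - 1) ≤ (3:ℝ) ^ (1:ℝ) :=
                    Real.rpow_le_rpow_of_exponent_le (by norm_num) (by linarith)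
                _ = 3 := Real.rpow_one 3
            · rw [hsplit |t| ht]
              exact mul_le_mul_of_nonneg_left htq2 (abs_nonneg t)
            · exact Real.rpow_nonneg (abs_nonneg _) _
            · norm_num
        _ = 6 * (|x| ^ (q - 2) * |t|) := by ring
    have e2 : |x| ^ (q - 1) ≤ 2 * (|x| ^ (q - 2) * |t|) := by
      rw [hsplit |x| habs]
      calc |x| * |x| ^ (q - 2) ≤ (2 * |t|) * |x| ^ (q - 2) :=
            mul_le_mul_of_nonneg_right hcase hxq2
        _ = 2 * (|x| ^ (q - 2) * |t|) := by ring
    calc |q * |x + t| ^ (q - 1) * Real.sign (x + t) - q * |x| ^ (q - 1) * Real.sign x|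
        ≤ |q * |x + t| ^ (q - 1) * Real.sign (x + t)| + |q * |x| ^ (q - 1) * Real.sign x| :=
          abs_sub _ _
      _ ≤ q * |x + t| ^ (q - 1) + q * |x| ^ (q - 1) :=
          add_le_add (Lq_psi_abs_le hq0.le _) (Lq_psi_abs_le hq0.le _)
      _ ≤ q * (6 * (|x| ^ (q - 2) * |t|)) + q * (2 * (|x| ^ (q - 2) * |t|)) :=
          add_le_add (mul_le_mul_of_nonneg_left e1 hq0.le)
            (mul_le_mul_of_nonneg_left e2 hq0.le)
      _ ≤ 12 * q * |x| ^ (q - 2) * |t| := by nlinarith [mul_nonneg hxq2 (abs_nonneg t)]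
  · -- MVT case : 2|t| < |x|
    push_neg at hcase
    set s : Set ℝ := Metric.closedBall x |t| with hs
    have hmem : ∀ ξ ∈ s, |x| / 2 ≤ |ξ| ∧ ξ ≠ 0 := by
      intro ξ hξ
      rw [hs, Metric.mem_closedBall, Real.dist_eq] at hξ
      have : |x| - |ξ| ≤ |x - ξ| := abs_sub_abs_le_abs_sub x ξ
      rw [abs_sub_comm] at this
      have h2 : |x| / 2 ≤ |ξ| := by linarith
      exact ⟨h2, by intro h; rw [h, abs_zero] at h2; linarith⟩
    have key := Convex.norm_image_sub_le_of_norm_hasDerivWithin_le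
      (f := fun y : ℝ => q * |y| ^ (q - 1) * Real.sign y)
      (f' := fun ξ : ℝ => q * (q - 1) * |ξ| ^ (q - 2))
      (C := q * (q - 1) * (2 * |x| ^ (q - 2)))
      (s := s)
      (fun ξ hξ => (Lq_hasDerivAt_psi hq1 (hmem ξ hξ).2).hasDerivWithinAt)
      (fun ξ hξ => by
        show ‖q * (q - 1) * |ξ| ^ (q - 2)‖ ≤ q * (q - 1) * (2 * |x| ^ (q - 2))
        rw [Real.norm_eq_abs, abs_of_nonneg (mul_nonneg
          (mul_nonneg hq0.le (by linarith)) (Real.rpow_nonneg (abs_nonneg ξ) _))]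
        exact mul_le_mul_of_nonneg_left (Lq_anti hq1 hq2 hx (hmem ξ hξ).1)
          (by nlinarith))
      (convex_closedBall x |t|)
      (Metric.mem_closedBall_self (abs_nonneg t))
      (by
        show x + t ∈ s
        rw [hs, Metric.mem_closedBall, Real.dist_eq, add_sub_cancel_left])
    rw [Real.norm_eq_abs, Real.norm_eq_abs] at key
    simp only [add_sub_cancel_left] at key
    calc |q * |x + t| ^ (q - 1) * Real.sign (x + t) - q * |x| ^ (q - 1) * Real.sign x|
        ≤ q * (q - 1) * (2 * |x| ^ (q - 2)) * |t| := key
      _ ≤ 12 * q * |x| ^ (q - 2) * |t| := by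
          have h14 : (0:ℝ) ≤ 14 - 2 * q := by linarith
          nlinarith [mul_nonneg (mul_nonneg hq0.le (mul_nonneg hxq2 (abs_nonneg t))) h14]



/-- For the `L_q` score `ψ_q(x) = q·|x|^{q−1}·sign(x)` with `q ∈ (1,2)`, if the
law of `ε` is symmetric about `0`, `P(ε = 0) = 0`, and `|ε|^{q−1}`, `|ε|^{q−2}` are integrable,
then `ψ_q(ε + t)` is integrable for every `t`, `E[ψ_q(ε)] = 0`, and `t ↦ E[ψ_q(ε + t)]` is
differentiable at `0` with derivative `q(q−1)·E[|ε|^{q−2}]`. -/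
theorem Lq_score_linearization
    {Ω : Type*} [MeasurableSpace Ω] (μ : Measure Ω) [IsProbabilityMeasure μ]
    (q : ℝ) (hq1 : 1 < q) (hq2 : q < 2)
    (ε : Ω → ℝ) (hε : Measurable ε)
    (hsym : μ.map ε = μ.map (fun ω => -ε ω))
    (h0 : μ {ω | ε ω = 0} = 0)
    (h1 : Integrable (fun ω => |ε ω| ^ (q - 1)) μ)
    (h2 : Integrable (fun ω => |ε ω| ^ (q - 2)) μ) :
    (∀ t : ℝ, Integrable (fun ω => q * |ε ω + t| ^ (q - 1) * Real.sign (ε ω + t)) μ) ∧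
    (∫ ω, q * |ε ω| ^ (q - 1) * Real.sign (ε ω) ∂μ) = 0 ∧
    HasDerivAt (fun t : ℝ => ∫ ω, q * |ε ω + t| ^ (q - 1) * Real.sign (ε ω + t) ∂μ)
      (q * (q - 1) * ∫ ω, |ε ω| ^ (q - 2) ∂μ) 0 := by
  have hq0 : (0:ℝ) < q := by linarith
  set ψ : ℝ → ℝ := fun y => q * |y| ^ (q - 1) * Real.sign y with hψ
  have mψ : Measurable ψ := Lq_psi_measurable hq1
  -- integrability
  have hInt : ∀ t : ℝ, Integrable (fun ω => ψ (ε ω + t)) μ := by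
    intro t
    have hbnd : Integrable
        (fun ω => 2 * q * (|ε ω| ^ (q - 1) + |t| ^ (q - 1))) μ :=
      ((h1.add (integrable_const (|t| ^ (q - 1)))).const_mul (2 * q))
    refine hbnd.mono' ((mψ.comp (hε.add_const t)).aestronglyMeasurable) ?_
    filter_upwards with ω
    rw [Real.norm_eq_abs]
    refine (Lq_psi_abs_le hq0.le _).trans ?_
    have habs : |ε ω + t| ≤ |ε ω| + |t| := abs_add_le _ _
    have key : |ε ω + t| ^ (q - 1) ≤ 2 * (|ε ω| ^ (q - 1) + |t| ^ (q - 1)) := by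
      rcases le_total |ε ω| |t| with hle | hle
      · calc |ε ω + t| ^ (q - 1) ≤ (2 * |t|) ^ (q - 1) :=
              Real.rpow_le_rpow (abs_nonneg _) (by linarith) (by linarith)
          _ = (2:ℝ) ^ (q - 1) * |t| ^ (q - 1) := Real.mul_rpow (by norm_num) (abs_nonneg t)
          _ ≤ 2 * |t| ^ (q - 1) := by
              refine mul_le_mul_of_nonneg_right ?_ (Real.rpow_nonneg (abs_nonneg t) _)
              calc (2:ℝ) ^ (q - 1) ≤ (2:ℝ) ^ (1:ℝ) :=
                    Real.rpow_le_rpow_of_exponent_le one_le_two (by linarith)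
                _ = 2 := Real.rpow_one 2
          _ ≤ 2 * (|ε ω| ^ (q - 1) + |t| ^ (q - 1)) := by
              have := Real.rpow_nonneg (abs_nonneg (ε ω)) (q - 1); linarith
      · calc |ε ω + t| ^ (q - 1) ≤ (2 * |ε ω|) ^ (q - 1) :=
              Real.rpow_le_rpow (abs_nonneg _) (by linarith) (by linarith)
          _ = (2:ℝ) ^ (q - 1) * |ε ω| ^ (q - 1) := Real.mul_rpow (by norm_num) (abs_nonneg _)
          _ ≤ 2 * |ε ω| ^ (q - 1) := by
              refine mul_le_mul_of_nonneg_right ?_ (Real.rpow_nonneg (abs_nonneg _) _)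
              calc (2:ℝ) ^ (q - 1) ≤ (2:ℝ) ^ (1:ℝ) :=
                    Real.rpow_le_rpow_of_exponent_le one_le_two (by linarith)
                _ = 2 := Real.rpow_one 2
          _ ≤ 2 * (|ε ω| ^ (q - 1) + |t| ^ (q - 1)) := by
              have := Real.rpow_nonneg (abs_nonneg t) (q - 1); linarith
    calc q * |ε ω + t| ^ (q - 1) ≤ q * (2 * (|ε ω| ^ (q - 1) + |t| ^ (q - 1))) :=
          mul_le_mul_of_nonneg_left key hq0.le
      _ = 2 * q * (|ε ω| ^ (q - 1) + |t| ^ (q - 1)) := by ring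
  -- a.e. nonvanishing
  have haee : ∀ᵐ ω ∂μ, ε ω ≠ 0 := by
    rw [ae_iff]
    simpa using h0
  -- symmetry gives mean zero
  have hzero : (∫ ω, ψ (ε ω) ∂μ) = 0 := by
    have hmap1 : (∫ ω, ψ (ε ω) ∂μ) = ∫ y, ψ y ∂(μ.map ε) :=
      (integral_map hε.aemeasurable mψ.aestronglyMeasurable).symm
    have hmap2 : (∫ y, ψ y ∂(μ.map fun ω => -ε ω)) = ∫ ω, ψ (-ε ω) ∂μ :=
      integral_map hε.neg.aemeasurable mψ.aestronglyMeasurable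
    have hodd : ∀ x : ℝ, ψ (-x) = -ψ x := by
      intro x
      simp only [hψ, abs_neg, Real.sign_neg]
      ring
    have : (∫ ω, ψ (ε ω) ∂μ) = -∫ ω, ψ (ε ω) ∂μ := by
      calc (∫ ω, ψ (ε ω) ∂μ) = ∫ y, ψ y ∂(μ.map ε) := hmap1
        _ = ∫ y, ψ y ∂(μ.map fun ω => -ε ω) := by rw [hsym]
        _ = ∫ ω, ψ (-ε ω) ∂μ := hmap2
        _ = ∫ ω, -ψ (ε ω) ∂μ := by simp_rw [hodd]
        _ = -∫ ω, ψ (ε ω) ∂μ := integral_neg _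
    linarith
  refine ⟨hInt, hzero, ?_⟩
  -- derivative
  rw [hasDerivAt_iff_tendsto_slope]
  have hD : q * (q - 1) * (∫ ω, |ε ω| ^ (q - 2) ∂μ)
      = ∫ ω, q * (q - 1) * |ε ω| ^ (q - 2) ∂μ := (integral_const_mul _ _).symm
  rw [hD]
  have hg0 : (∫ ω, ψ (ε ω + 0) ∂μ) = ∫ ω, ψ (ε ω) ∂μ := by simp only [add_zero]
  have hmain : Tendsto (fun t : ℝ => ∫ ω, (ψ (ε ω + t) - ψ (ε ω)) / t ∂μ)
      (𝓝[≠] (0:ℝ)) (𝓝 (∫ ω, q * (q - 1) * |ε ω| ^ (q - 2) ∂μ)) := by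
    refine tendsto_integral_filter_of_dominated_convergence
      (fun ω => 12 * q * |ε ω| ^ (q - 2)) ?_ ?_ (h2.const_mul (12 * q)) ?_
    · filter_upwards with t
      exact (((mψ.comp (hε.add_const t)).sub (mψ.comp hε)).div_const t).aestronglyMeasurable
    · filter_upwards [self_mem_nhdsWithin] with t ht
      filter_upwards [haee] with ω hω
      have ht' : (0:ℝ) < |t| := abs_pos.mpr ht
      rw [Real.norm_eq_abs, abs_div]
      rw [div_le_iff₀ ht']
      exact Lq_key hq1 hq2 t hω
    · filter_upwards [haee] with ω hω
      have hadd : HasDerivAt (fun t : ℝ => ε ω + t) 1 0 := (hasDerivAt_id 0).const_add (ε ω)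
      have hd : HasDerivAt (fun t : ℝ => ψ (ε ω + t))
          (q * (q - 1) * |ε ω| ^ (q - 2)) 0 := by
        have hx0 : ε ω + 0 ≠ 0 := by simpa using hω
        have := (Lq_hasDerivAt_psi hq1 hx0).comp 0 hadd
        simpa [Function.comp_def] using this
      have := hasDerivAt_iff_tendsto_slope.mp hd
      refine this.congr fun t => ?_
      simp [slope_def_field, ψ]
  refine hmain.congr' ?_
  filter_upwards [self_mem_nhdsWithin] with t ht
  have hsub : (∫ ω, (ψ (ε ω + t) - ψ (ε ω)) / t ∂μ)
      = ((∫ ω, ψ (ε ω + t) ∂μ) - ∫ ω, ψ (ε ω) ∂μ) / t := by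
    rw [← integral_sub (hInt t) (by simpa using hInt 0), integral_div]
  rw [hsub]
  have : slope (fun t : ℝ => ∫ ω, ψ (ε ω + t) ∂μ) 0 t
      = ((∫ ω, ψ (ε ω + t) ∂μ) - ∫ ω, ψ (ε ω + 0) ∂μ) / t := by
    rw [slope_def_field, sub_zero]
  rw [this, hg0]
end

section
/- Let α ∈ (0, 1) and let ψ_α(x) = (1 − α)·x for x ≤ 0 and ψ_α(x) = α·x for x > 0 be the expectile score function. Suppose ε is an integrable real random variable whose cumulative distribution function F(x) = P(ε ≤ x) is continuous on a neighborhood of 0. Then the map t ↦ E[ψ_α(ε + t)] is differentiable at t = 0 with derivative α + (1 − 2α)·F(0), and this derivative is strictly positive for every α ∈ (0, 1). -/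
open MeasureTheory Filter Topology

/-- For the expectile score `ψ_α(x) = (1−α)x` for `x ≤ 0` and `αx` for `x > 0`
with `α ∈ (0,1)`, if `ε` is integrable with cdf `F` continuous on a neighborhood of `0`, then
`t ↦ E[ψ_α(ε + t)]` is differentiable at `0` with derivative `α + (1 − 2α)·F(0)`, which is
strictly positive. -/
theorem expectile_score_linearization
    {Ω : Type*} [MeasurableSpace Ω] (μ : Measure Ω) [IsProbabilityMeasure μ]
    (α : ℝ) (hα0 : 0 < α) (hα1 : α < 1)
    (ε : Ω → ℝ) (hε : Measurable ε) (hint : Integrable ε μ)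
    (F : ℝ → ℝ) (hF : ∀ x : ℝ, F x = (μ {ω | ε ω ≤ x}).toReal)
    (U : Set ℝ) (hU : U ∈ 𝓝 (0 : ℝ)) (hFc : ContinuousOn F U) :
    HasDerivAt
      (fun t : ℝ =>
        ∫ ω, (if ε ω + t ≤ 0 then (1 - α) * (ε ω + t) else α * (ε ω + t)) ∂μ)
      (α + (1 - 2 * α) * F 0) 0 ∧
    0 < α + (1 - 2 * α) * F 0 := by
  have hmeas : ∀ x : ℝ, MeasurableSet {ω | ε ω ≤ x} := fun x => hε measurableSet_Iic
  have hlt : MeasurableSet {ω | ε ω < 0} := hε measurableSet_Iio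
  -- F bounds
  have hF0 : 0 ≤ F 0 := by rw [hF]; exact ENNReal.toReal_nonneg
  have hF1 : F 0 ≤ 1 := by
    rw [hF]
    exact ENNReal.toReal_le_of_le_ofReal one_pos.le (by simpa using prob_le_one)
  -- continuity at 0
  have hFc0 : ContinuousAt F 0 := hFc.continuousAt hU
  -- μ {ε = 0} = 0
  have key : ∀ x : ℝ, x < 0 → (μ {ω | ε ω = 0}).toReal ≤ F 0 - F x := by
    intro x hx
    have hsub : {ω | ε ω ≤ x} ⊆ {ω | ε ω ≤ 0} := fun ω h => le_trans h hx.le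
    have hsub2 : {ω | ε ω = 0} ⊆ {ω | ε ω ≤ 0} \ {ω | ε ω ≤ x} := by
      intro ω h
      have h' : ε ω = 0 := h
      exact ⟨le_of_eq h', fun hx' => by simp only [Set.mem_setOf_eq, h'] at hx'; linarith⟩
    have h1 : μ {ω | ε ω = 0} ≤ μ {ω | ε ω ≤ 0} - μ {ω | ε ω ≤ x} :=
      le_trans (measure_mono hsub2) (le_of_eq (measure_diff hsub (hmeas x).nullMeasurableSet (measure_ne_top μ _)))
    have h2 := ENNReal.toReal_mono (by
      exact ne_top_of_le_ne_top (measure_ne_top μ _) tsub_le_self) h1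
    rw [ENNReal.toReal_sub_of_le (measure_mono hsub) (measure_ne_top μ _)] at h2
    rw [hF, hF]; exact h2
  have hzero : μ {ω | ε ω = 0} = 0 := by
    have hseq : Tendsto (fun n : ℕ => -(1 / (n + 1 : ℝ))) atTop (𝓝 0) := by
      simpa using (tendsto_one_div_add_atTop_nhds_zero_nat (𝕜 := ℝ)).neg
    have hFseq : Tendsto (fun n : ℕ => F 0 - F (-(1 / (n + 1 : ℝ)))) atTop (𝓝 0) := by
      have := (hFc0.tendsto.comp hseq).const_sub (F 0)
      simpa using this
    have hle : (μ {ω | ε ω = 0}).toReal ≤ 0 :=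
      ge_of_tendsto' hFseq (fun n => key _ (neg_neg_iff_pos.mpr (by positivity)))
    have := le_antisymm hle ENNReal.toReal_nonneg
    rcases (ENNReal.toReal_eq_zero_iff _).mp this with h | h
    · exact h
    · exact absurd h (measure_ne_top μ _)
  have hFlt : (μ {ω | ε ω < 0}).toReal = F 0 := by
    have hunion : {ω | ε ω ≤ 0} = {ω | ε ω < 0} ∪ {ω | ε ω = 0} := by
      ext ω; simp [le_iff_lt_or_eq]
    rw [hF, hunion]
    congr 1
    refine le_antisymm (measure_mono Set.subset_union_left) ?_
    calc μ ({ω | ε ω < 0} ∪ {ω | ε ω = 0}) ≤ μ {ω | ε ω < 0} + μ {ω | ε ω = 0} :=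
          measure_union_le _ _
      _ = μ {ω | ε ω < 0} := by rw [hzero, add_zero]
  -- integrability of min
  have hεt : ∀ t : ℝ, Integrable (fun ω => ε ω + t) μ := fun t => hint.add (integrable_const t)
  have hm_int : ∀ t : ℝ, Integrable (fun ω => min (ε ω + t) 0) μ := by
    intro t
    refine Integrable.mono (hεt t)
      (((hε.add_const t).min measurable_const).aestronglyMeasurable) ?_
    filter_upwards with ω
    simp only [Real.norm_eq_abs]
    rcases le_total (ε ω + t) 0 with h | h
    · rw [min_eq_left h]
    · rw [min_eq_right h]; simp
  -- ae ε ≠ 0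
  have hae : ∀ᵐ ω ∂μ, ε ω ≠ 0 := by
    rw [ae_iff]; simpa using hzero
  -- Lipschitz bound
  have hlip : ∀ a t : ℝ, |min (a + t) 0 - min a 0| ≤ |t| := by
    intro a t
    rcases le_total (a+t) 0 with h1 | h1 <;> rcases le_total a 0 with h2 | h2 <;>
      simp [min_eq_left, min_eq_right, h1, h2, abs_le] <;> constructor <;>
      linarith [abs_nonneg t, le_abs_self t, neg_abs_le t]
  -- derivative of φ
  have hφ : HasDerivAt (fun t : ℝ => ∫ ω, min (ε ω + t) 0 ∂μ) (F 0) 0 := by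
    rw [hasDerivAt_iff_tendsto_slope]
    have hDCT :
        Tendsto (fun t : ℝ => ∫ ω, (min (ε ω + t) 0 - min (ε ω + 0) 0) / t ∂μ)
          (𝓝[≠] (0:ℝ)) (𝓝 (∫ ω, (if ε ω < 0 then (1:ℝ) else 0) ∂μ)) := by
      apply tendsto_integral_filter_of_dominated_convergence (bound := fun _ => (1:ℝ))
      · filter_upwards with t
        exact ((((hε.add_const t).min measurable_const).sub
          ((hε.add_const 0).min measurable_const)).div_const t).aestronglyMeasurable
      · filter_upwards [self_mem_nhdsWithin] with t ht
        filter_upwards with ω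
        simp only [Real.norm_eq_abs, abs_div, add_zero]
        rw [div_le_one (abs_pos.mpr ht)]
        exact hlip (ε ω) t
      · exact integrable_const 1
      · filter_upwards [hae] with ω hω
        rcases lt_or_gt_of_ne hω with h | h
        · simp only [if_pos h]
          apply Tendsto.congr' _ tendsto_const_nhds
          filter_upwards [nhdsWithin_le_nhds (Iio_mem_nhds (by linarith : (0:ℝ) < -ε ω)),
            self_mem_nhdsWithin] with t ht htne
          have h1 : ε ω + t ≤ 0 := by simp at ht ⊢; linarith
          have htne' : t ≠ 0 := htne
          rw [add_zero, min_eq_left h1, min_eq_left h.le,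
            show ε ω + t - ε ω = t from by ring, div_self htne']
        · simp only [if_neg (not_lt.mpr h.le)]
          apply Tendsto.congr' _ tendsto_const_nhds
          filter_upwards [nhdsWithin_le_nhds (Ioi_mem_nhds (by linarith : -ε ω < 0)),
            self_mem_nhdsWithin] with t ht htne
          have h1 : 0 ≤ ε ω + t := by simp at ht ⊢; linarith
          rw [add_zero, min_eq_right h1, min_eq_right h.le]
          simp
    have hint_eq : ∫ ω, (if ε ω < 0 then (1:ℝ) else 0) ∂μ = F 0 := by
      have : (fun ω => if ε ω < 0 then (1:ℝ) else 0)
          = Set.indicator {ω | ε ω < 0} (fun _ => (1:ℝ)) := by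
        ext ω; simp [Set.indicator_apply]
      rw [this, integral_indicator_const _ hlt, smul_eq_mul, mul_one, measureReal_def, hFlt]
    rw [hint_eq] at hDCT
    apply Tendsto.congr' _ hDCT
    filter_upwards [self_mem_nhdsWithin] with t ht
    rw [slope_def_field]
    rw [integral_div, integral_sub (hm_int t) (hm_int 0)]
    rw [sub_zero]
  -- rewrite the integrand
  have heq : (fun t : ℝ =>
        ∫ ω, (if ε ω + t ≤ 0 then (1 - α) * (ε ω + t) else α * (ε ω + t)) ∂μ)
      = fun t : ℝ => (α * (∫ ω, ε ω ∂μ) + α * t) + (1 - 2 * α) * ∫ ω, min (ε ω + t) 0 ∂μ := by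
    funext t
    have h1 : ∀ ω, (if ε ω + t ≤ 0 then (1 - α) * (ε ω + t) else α * (ε ω + t))
        = α * (ε ω + t) + (1 - 2 * α) * min (ε ω + t) 0 := by
      intro ω
      rcases le_or_gt (ε ω + t) 0 with h | h
      · rw [if_pos h, min_eq_left h]; ring
      · rw [if_neg (not_le.mpr h), min_eq_right h.le]; ring
    simp_rw [h1]
    rw [integral_add ((hεt t).const_mul α) ((hm_int t).const_mul _),
      integral_const_mul, integral_const_mul,
      integral_add hint (integrable_const t), integral_const]
    simp [measure_univ]
    ring
  constructor
  · rw [heq]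
    have h1 : HasDerivAt (fun t : ℝ => α * (∫ ω, ε ω ∂μ) + α * t) α 0 := by
      simpa using ((hasDerivAt_id (0:ℝ)).const_mul α).const_add (α * (∫ ω, ε ω ∂μ))
    have := h1.add (hφ.const_mul (1 - 2 * α))
    exact this
  · rcases le_or_gt 0 (1 - 2 * α) with h | h
    · nlinarith
    · nlinarith [mul_le_mul_of_nonpos_left hF1 h.le]
end

section
/- Let 0 < a ≤ b < c and let ψ_{a,b,c} be the Hampel score function: ψ_{a,b,c}(x) = x for |x| ≤ a; ψ_{a,b,c}(x) = a·sign(x) for a < |x| ≤ b; ψ_{a,b,c}(x) = a·sign(x)·(c − |x|)/(c − b) for b < |x| ≤ c; and ψ_{a,b,c}(x) = 0 for |x| > c. Suppose the real random variable ε has a law absolutely continuous with respect to Lebesgue measure with density f satisfying f(−x) = f(x) for almost every x. Then E[ψ_{a,b,c}(ε)] = 0 and the map t ↦ E[ψ_{a,b,c}(ε + t)] is differentiable at t = 0 with derivative 2F(a) − 1 − 2a·(F(c) − F(b))/(c − b), where F(x) = P(ε ≤ x). -/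
open MeasureTheory Filter Topology

/-- The three-point Hampel score function with constants `0 < a ≤ b < c`. -/
noncomputable def hampelScore (a b c : ℝ) (x : ℝ) : ℝ :=
  if |x| ≤ a then x
  else if |x| ≤ b then a * Real.sign x
  else if |x| ≤ c then a * Real.sign x * (c - |x|) / (c - b)
  else 0

section HampelAux
open Set

noncomputable def htrunc (s x : ℝ) : ℝ := min s (max (-s) x)

lemma htrunc_eq_self {s x : ℝ} (h : |x| ≤ s) : htrunc s x = x := by
  have h1 := abs_le.1 h
  rw [htrunc, max_eq_right h1.1, min_eq_right h1.2]

lemma htrunc_eq_of_le {s x : ℝ} (hs : 0 ≤ s) (h : s ≤ x) : htrunc s x = s := by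
  rw [htrunc, max_eq_right (by linarith), min_eq_left h]

lemma htrunc_eq_of_ge {s x : ℝ} (hs : 0 ≤ s) (h : x ≤ -s) : htrunc s x = -s := by
  rw [htrunc, max_eq_left h, min_eq_right (by linarith)]

lemma abs_htrunc_le {s x : ℝ} (hs : 0 ≤ s) : |htrunc s x| ≤ s := by
  rw [abs_le]
  constructor
  · exact le_min (by linarith) (le_max_left _ _)
  · exact min_le_left _ _

lemma abs_htrunc_sub_le (s x y : ℝ) : |htrunc s x - htrunc s y| ≤ |x - y| := by
  have h1 : |htrunc s x - htrunc s y| ≤ max |s - s| |max (-s) x - max (-s) y| :=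
    abs_min_sub_min_le_max _ _ _ _
  have h2 : |max (-s) x - max (-s) y| ≤ |x - y| := by
    rw [max_comm (-s) x, max_comm (-s) y]; exact abs_max_sub_max_le_abs _ _ _
  refine h1.trans (max_le ?_ h2)
  rw [sub_self, abs_zero]
  exact abs_nonneg _

lemma htrunc_neg {s : ℝ} (hs : 0 ≤ s) (x : ℝ) : htrunc s (-x) = - htrunc s x := by
  rcases le_total x (-s) with h | h
  · rw [htrunc_eq_of_ge hs h, htrunc_eq_of_le hs (by linarith), neg_neg]
  rcases le_total s x with h' | h'
  · rw [htrunc_eq_of_le hs h', htrunc_eq_of_ge hs (by linarith)]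
  · rw [htrunc_eq_self (abs_le.2 ⟨by linarith, h'⟩),
      htrunc_eq_self (abs_le.2 ⟨by linarith, by linarith⟩)]

lemma hampel_eq {a b c : ℝ} (ha : 0 < a) (hab : a ≤ b) (hbc : b < c) (x : ℝ) :
    hampelScore a b c x = htrunc a x - a / (c - b) * (htrunc c x - htrunc b x) := by
  have hb : 0 < b := lt_of_lt_of_le ha hab
  have hc : 0 < c := lt_trans hb hbc
  have hcb : (0:ℝ) < c - b := by linarith
  rw [hampelScore]
  split_ifs with h1 h2 h3
  · rw [htrunc_eq_self h1, htrunc_eq_self (h1.trans (hab.trans hbc.le)),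
      htrunc_eq_self (h1.trans hab)]
    ring
  · -- a < |x| ≤ b
    push_neg at h1
    rw [htrunc_eq_self (h2.trans hbc.le), htrunc_eq_self h2]
    rcases le_or_gt x 0 with hx | hx
    · have hxa : x ≤ -a := by
        rcases abs_cases x with ⟨h, _⟩ | ⟨h, _⟩ <;> linarith
      rw [htrunc_eq_of_ge ha.le hxa, Real.sign_of_neg (by linarith)]
      ring
    · have hxa : a ≤ x := by
        rcases abs_cases x with ⟨h, _⟩ | ⟨h, _⟩ <;> linarith
      rw [htrunc_eq_of_le ha.le hxa, Real.sign_of_pos hx]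
      ring
  · -- b < |x| ≤ c
    push_neg at h1 h2
    rw [htrunc_eq_self h3]
    rcases le_or_gt x 0 with hx | hx
    · have hxb : x ≤ -b := by
        rcases abs_cases x with ⟨h, _⟩ | ⟨h, _⟩ <;> linarith
      have habs : |x| = -x := abs_of_nonpos hx
      rw [htrunc_eq_of_ge ha.le (by linarith), htrunc_eq_of_ge hb.le hxb,
        Real.sign_of_neg (by linarith), habs]
      field_simp
      try ring
    · have hxb : b ≤ x := by
        rcases abs_cases x with ⟨h, _⟩ | ⟨h, _⟩ <;> linarith
      have habs : |x| = x := abs_of_pos hx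
      rw [htrunc_eq_of_le ha.le (by linarith), htrunc_eq_of_le hb.le hxb,
        Real.sign_of_pos hx, habs]
      field_simp
      try ring
  · -- |x| > c
    push_neg at h1 h2 h3
    rcases le_or_gt x 0 with hx | hx
    · have hxc : x ≤ -c := by
        rcases abs_cases x with ⟨h, _⟩ | ⟨h, _⟩ <;> linarith
      rw [htrunc_eq_of_ge ha.le (by linarith), htrunc_eq_of_ge hb.le (by linarith),
        htrunc_eq_of_ge hc.le hxc]
      field_simp
      try ring
    · have hxc : c ≤ x := by
        rcases abs_cases x with ⟨h, _⟩ | ⟨h, _⟩ <;> linarith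
      rw [htrunc_eq_of_le ha.le (by linarith), htrunc_eq_of_le hb.le (by linarith),
        htrunc_eq_of_le hc.le hxc]
      field_simp
      try ring

lemma hampel_neg {a b c : ℝ} (ha : 0 < a) (hab : a ≤ b) (hbc : b < c) (x : ℝ) :
    hampelScore a b c (-x) = - hampelScore a b c x := by
  have hb : 0 < b := lt_of_lt_of_le ha hab
  have hc : 0 < c := lt_trans hb hbc
  rw [hampel_eq ha hab hbc, hampel_eq ha hab hbc, htrunc_neg ha.le, htrunc_neg hb.le,
    htrunc_neg hc.le]
  ring

lemma hampel_abs_le {a b c : ℝ} (ha : 0 < a) (hab : a ≤ b) (hbc : b < c) (x : ℝ) :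
    |hampelScore a b c x| ≤ a + a / (c - b) * (c + b) := by
  have hb : 0 < b := lt_of_lt_of_le ha hab
  have hc : 0 < c := lt_trans hb hbc
  have hk : 0 ≤ a / (c - b) := div_nonneg ha.le (by linarith)
  rw [hampel_eq ha hab hbc]
  calc |htrunc a x - a / (c - b) * (htrunc c x - htrunc b x)|
      ≤ |htrunc a x| + |a / (c - b) * (htrunc c x - htrunc b x)| := abs_sub _ _
    _ ≤ a + a / (c - b) * (c + b) := by
        rw [abs_mul, abs_of_nonneg hk]
        gcongr
        · exact abs_htrunc_le ha.le
        · calc |htrunc c x - htrunc b x| ≤ |htrunc c x| + |htrunc b x| := abs_sub _ _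
            _ ≤ c + b := add_le_add (abs_htrunc_le hc.le) (abs_htrunc_le hb.le)

lemma hampel_lipschitz {a b c : ℝ} (ha : 0 < a) (hab : a ≤ b) (hbc : b < c) :
    LipschitzWith (Real.nnabs (1 + 2 * (a / (c - b)))) (hampelScore a b c) := by
  have hk : 0 ≤ a / (c - b) := div_nonneg ha.le (by linarith)
  apply LipschitzWith.of_dist_le_mul
  intro x y
  rw [Real.coe_nnabs, abs_of_nonneg (by linarith), Real.dist_eq, Real.dist_eq,
    hampel_eq ha hab hbc, hampel_eq ha hab hbc]
  have h1 := abs_htrunc_sub_le a x y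
  have h2 := abs_htrunc_sub_le b x y
  have h3 := abs_htrunc_sub_le c x y
  have e : htrunc a x - a / (c - b) * (htrunc c x - htrunc b x) -
      (htrunc a y - a / (c - b) * (htrunc c y - htrunc b y)) =
      (htrunc a x - htrunc a y) -
        a / (c - b) * ((htrunc c x - htrunc c y) - (htrunc b x - htrunc b y)) := by ring
  rw [e]
  calc _ ≤ |htrunc a x - htrunc a y| +
        |a / (c - b) * ((htrunc c x - htrunc c y) - (htrunc b x - htrunc b y))| := abs_sub _ _
    _ ≤ |x - y| + a / (c - b) * (|x - y| + |x - y|) := by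
        rw [abs_mul, abs_of_nonneg hk]
        gcongr
        calc _ ≤ |htrunc c x - htrunc c y| + |htrunc b x - htrunc b y| := abs_sub _ _
          _ ≤ _ := add_le_add h3 h2
    _ = (1 + 2 * (a / (c - b))) * |x - y| := by ring

lemma hasDerivAt_htrunc {s : ℝ} (hs : 0 < s) {x : ℝ} (h : |x| ≠ s) :
    HasDerivAt (fun t => htrunc s (x + t)) (if |x| < s then 1 else 0) 0 := by
  rcases lt_or_gt_of_ne h with h | h
  · rw [if_pos h]
    have hd : HasDerivAt (fun t : ℝ => x + t) 1 0 := (hasDerivAt_id 0).const_add x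
    apply hd.congr_of_eventuallyEq
    filter_upwards [Metric.ball_mem_nhds (0:ℝ) (show (0:ℝ) < s - |x| by linarith)] with t ht
    rw [mem_ball_zero_iff, Real.norm_eq_abs] at ht
    exact htrunc_eq_self (by have h1 := abs_add_le x t; linarith)
  · rw [if_neg (not_lt.2 h.le)]
    rcases abs_cases x with ⟨hx, _⟩ | ⟨hx, _⟩
    · apply (hasDerivAt_const (0:ℝ) s).congr_of_eventuallyEq
      filter_upwards [Metric.ball_mem_nhds (0:ℝ) (show (0:ℝ) < |x| - s by linarith)] with t ht
      rw [mem_ball_zero_iff, Real.norm_eq_abs] at ht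
      have ht' := abs_lt.1 ht
      exact htrunc_eq_of_le hs.le (by linarith)
    · apply (hasDerivAt_const (0:ℝ) (-s)).congr_of_eventuallyEq
      filter_upwards [Metric.ball_mem_nhds (0:ℝ) (show (0:ℝ) < |x| - s by linarith)] with t ht
      rw [mem_ball_zero_iff, Real.norm_eq_abs] at ht
      have ht' := abs_lt.1 ht
      exact htrunc_eq_of_ge hs.le (by linarith)

noncomputable def hampelD (a b c : ℝ) (x : ℝ) : ℝ :=
  (if |x| < a then 1 else 0) -
    a / (c - b) * ((if |x| < c then 1 else 0) - (if |x| < b then 1 else 0))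

lemma hasDerivAt_hampel {a b c : ℝ} (ha : 0 < a) (hab : a ≤ b) (hbc : b < c) {x : ℝ}
    (hxa : |x| ≠ a) (hxb : |x| ≠ b) (hxc : |x| ≠ c) :
    HasDerivAt (fun t => hampelScore a b c (x + t)) (hampelD a b c x) 0 := by
  have hb : 0 < b := lt_of_lt_of_le ha hab
  have hc : 0 < c := lt_trans hb hbc
  have hfun : (fun t => hampelScore a b c (x + t)) =
      fun t => htrunc a (x + t) - a / (c - b) * (htrunc c (x + t) - htrunc b (x + t)) :=
    funext fun t => hampel_eq ha hab hbc _
  rw [hfun, hampelD]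
  exact (hasDerivAt_htrunc ha hxa).sub
    (((hasDerivAt_htrunc hc hxc).sub (hasDerivAt_htrunc hb hxb)).const_mul _)

lemma hampelD_eq_indicator (a b c : ℝ) (x : ℝ) :
    hampelD a b c x = (Set.Ioo (-a) a).indicator (fun _ => (1:ℝ)) x -
      a / (c - b) * ((Set.Ioo (-c) c).indicator (fun _ => (1:ℝ)) x -
        (Set.Ioo (-b) b).indicator (fun _ => (1:ℝ)) x) := by
  simp only [hampelD, Set.indicator_apply, Set.mem_Ioo, ← abs_lt]

lemma hampelD_measurable (a b c : ℝ) : Measurable (hampelD a b c) := by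
  have : hampelD a b c = fun x => (Set.Ioo (-a) a).indicator (fun _ => (1:ℝ)) x -
      a / (c - b) * ((Set.Ioo (-c) c).indicator (fun _ => (1:ℝ)) x -
        (Set.Ioo (-b) b).indicator (fun _ => (1:ℝ)) x) := funext (hampelD_eq_indicator a b c)
  rw [this]
  exact ((measurable_const.indicator measurableSet_Ioo).sub
    (measurable_const.mul ((measurable_const.indicator measurableSet_Ioo).sub
      (measurable_const.indicator measurableSet_Ioo))))


end HampelAux

open Set in
/-- For the Hampel score with `0 < a ≤ b < c`, if `ε` has an (a.e.) symmetric
Lebesgue density `f`, then `E[ψ_{a,b,c}(ε)] = 0` and `t ↦ E[ψ_{a,b,c}(ε + t)]` is differentiable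
at `0` with derivative `2F(a) − 1 − 2a(F(c) − F(b))/(c − b)`, where `F` is the cdf of `ε`. -/
theorem hampel_score_linearization
    {Ω : Type*} [MeasurableSpace Ω] (μ : Measure Ω) [IsProbabilityMeasure μ]
    (a b c : ℝ) (ha : 0 < a) (hab : a ≤ b) (hbc : b < c)
    (ε : Ω → ℝ) (hε : Measurable ε)
    (f : ℝ → ℝ) (hfmeas : Measurable f)
    (hf0 : ∀ᵐ x ∂(volume : Measure ℝ), 0 ≤ f x)
    (hlaw : μ.map ε = (volume : Measure ℝ).withDensity (fun x => ENNReal.ofReal (f x)))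
    (hsym : ∀ᵐ x ∂(volume : Measure ℝ), f (-x) = f x)
    (F : ℝ → ℝ) (hF : ∀ x : ℝ, F x = (μ {ω | ε ω ≤ x}).toReal) :
    (∫ ω, hampelScore a b c (ε ω) ∂μ) = 0 ∧
    HasDerivAt (fun t : ℝ => ∫ ω, hampelScore a b c (ε ω + t) ∂μ)
      (2 * F a - 1 - 2 * a * (F c - F b) / (c - b)) 0 := by
  have hb : 0 < b := lt_of_lt_of_le ha hab
  have hc0 : 0 < c := lt_trans hb hbc
  have hcb : (0:ℝ) < c - b := by linarith
  have hk : (0:ℝ) ≤ a / (c - b) := div_nonneg ha.le hcb.le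
  set ν : Measure ℝ := (volume : Measure ℝ).withDensity (fun x => ENNReal.ofReal (f x))
    with hνdef
  have hν_prob : IsProbabilityMeasure ν := by
    have h := Measure.isProbabilityMeasure_map (μ := μ) hε.aemeasurable
    rwa [hlaw] at h
  have hpre : ∀ {s : Set ℝ}, MeasurableSet s → μ (ε ⁻¹' s) = ν s := by
    intro s hs
    rw [← hlaw, Measure.map_apply hε hs]
  have hatom : ∀ x : ℝ, ν {x} = 0 := by
    intro x
    rw [hνdef, withDensity_apply _ (measurableSet_singleton x)]
    exact setLIntegral_measure_zero _ _ (measure_singleton x)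
  have hmeas_ofReal : Measurable fun x => ENNReal.ofReal (f x) := hfmeas.ennreal_ofReal
  have hνneg : ν.map (fun x : ℝ => -x) = ν := by
    ext s hs
    rw [Measure.map_apply measurable_neg hs, hνdef, withDensity_apply _ (measurable_neg hs),
      withDensity_apply _ hs]
    have key := (Measure.measurePreserving_neg (volume : Measure ℝ)).setLIntegral_comp_preimage
      hs hmeas_ofReal
    rw [← key]
    apply lintegral_congr_ae
    filter_upwards [ae_restrict_of_ae hsym] with x hx
    rw [hx]
  have hFν : ∀ x : ℝ, F x = (ν (Iic x)).toReal := by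
    intro x
    rw [hF]
    congr 1
    exact hpre measurableSet_Iic
  have hIicIio : ∀ x : ℝ, ν (Iio x) = ν (Iic x) := by
    intro x
    rw [← Iic_diff_right, measure_diff_null (hatom x)]
  have hFneg : ∀ x : ℝ, F (-x) = 1 - F x := by
    intro x
    rw [hFν, hFν]
    have h1 : ν (Iic (-x)) = ν (Ici x) := by
      conv_lhs => rw [← hνneg]
      rw [Measure.map_apply measurable_neg measurableSet_Iic]
      congr 1
      ext y
      simp only [Set.mem_preimage, Set.mem_Iic, Set.mem_Ici, neg_le_neg_iff]
    rw [h1, ← compl_Iio, measure_compl measurableSet_Iio (measure_ne_top ν _), measure_univ,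
      ENNReal.toReal_sub_of_le prob_le_one ENNReal.one_ne_top, ENNReal.toReal_one, hIicIio]
  have hIoo : ∀ s : ℝ, 0 < s → (ν (Ioo (-s) s)).toReal = 2 * F s - 1 := by
    intro s hs
    have hsub : Iic (-s) ⊆ Iio s := fun y hy => lt_of_le_of_lt (mem_Iic.1 hy) (by linarith)
    have hIooeq : Ioo (-s) s = Iio s \ Iic (-s) := by
      ext y; simp only [mem_Ioo, mem_diff, mem_Iio, mem_Iic, not_le]; exact and_comm
    rw [hIooeq, measure_diff hsub measurableSet_Iic.nullMeasurableSet (measure_ne_top ν _),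
      ENNReal.toReal_sub_of_le (measure_mono hsub) (measure_ne_top ν _), hIicIio, ← hFν, ← hFν,
      hFneg]
    ring
  have hψcont : Continuous (hampelScore a b c) := (hampel_lipschitz ha hab hbc).continuous
  have hchange : ∀ g : ℝ → ℝ, AEStronglyMeasurable g ν →
      ∫ ω, g (ε ω) ∂μ = ∫ x, g x ∂ν := by
    intro g hg
    rw [← hlaw] at hg
    rw [← integral_map hε.aemeasurable hg, hlaw]
  -- Part 1
  have hodd : ∫ x, hampelScore a b c x ∂ν = - ∫ x, hampelScore a b c x ∂ν := by
    have hg' : AEStronglyMeasurable (hampelScore a b c) (ν.map fun x : ℝ => -x) := by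
      rw [hνneg]; exact hψcont.aestronglyMeasurable
    conv_lhs => rw [← hνneg]
    rw [integral_map measurable_neg.aemeasurable hg']
    simp_rw [hampel_neg ha hab hbc]
    rw [integral_neg]
  have part1 : (∫ ω, hampelScore a b c (ε ω) ∂μ) = 0 := by
    rw [hchange _ hψcont.aestronglyMeasurable]
    linarith [hodd]
  -- Part 2
  have hae_ne : ∀ r : ℝ, ∀ᵐ ω ∂μ, ε ω ≠ r := by
    intro r
    rw [ae_iff]
    have h : {ω | ¬ ε ω ≠ r} = ε ⁻¹' {r} := by ext ω; simp
    rw [h, hpre (measurableSet_singleton r), hatom]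
  have hae_abs : ∀ᵐ ω ∂μ, |ε ω| ≠ a ∧ |ε ω| ≠ b ∧ |ε ω| ≠ c := by
    filter_upwards [hae_ne a, hae_ne (-a), hae_ne b, hae_ne (-b), hae_ne c, hae_ne (-c)]
      with ω h1 h2 h3 h4 h5 h6
    refine ⟨fun h => ?_, fun h => ?_, fun h => ?_⟩
    · rcases (abs_eq ha.le).1 h with h' | h'
      exacts [h1 h', h2 h']
    · rcases (abs_eq hb.le).1 h with h' | h'
      exacts [h3 h', h4 h']
    · rcases (abs_eq hc0.le).1 h with h' | h'
      exacts [h5 h', h6 h']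
  have main := hasDerivAt_integral_of_dominated_loc_of_lip (μ := μ) (x₀ := (0:ℝ))
    (F := fun t ω => hampelScore a b c (ε ω + t)) (F' := fun ω => hampelD a b c (ε ω))
    (bound := fun _ => 1 + 2 * (a / (c - b))) (Metric.ball_mem_nhds 0 one_pos)
    (Eventually.of_forall fun t =>
      ((hψcont.measurable.comp (hε.add_const t)).aestronglyMeasurable))
    (by
      refine (integrable_const (a + a / (c - b) * (c + b))).mono'
        ((hψcont.measurable.comp (hε.add_const 0)).aestronglyMeasurable)
        (Eventually.of_forall fun ω => ?_)
      rw [Real.norm_eq_abs]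
      exact hampel_abs_le ha hab hbc _)
    (((hampelD_measurable a b c).comp hε).aestronglyMeasurable)
    (Eventually.of_forall fun ω => by
      have hlip : LipschitzWith (Real.nnabs (1 + 2 * (a / (c - b))))
          (fun t => hampelScore a b c (ε ω + t)) := by
        apply LipschitzWith.of_dist_le_mul
        intro t t'
        have h := (hampel_lipschitz ha hab hbc).dist_le_mul (ε ω + t) (ε ω + t')
        simpa [dist_add_left] using h
      exact hlip.lipschitzOnWith (s := Metric.ball 0 1))
    (integrable_const _)
    (by
      filter_upwards [hae_abs] with ω h
      exact hasDerivAt_hampel ha hab hbc h.1 h.2.1 h.2.2)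
  have hDval : ∫ ω, hampelD a b c (ε ω) ∂μ
      = 2 * F a - 1 - 2 * a * (F c - F b) / (c - b) := by
    rw [hchange _ ((hampelD_measurable a b c).aestronglyMeasurable)]
    have hind : ∀ s : ℝ, 0 < s →
        ∫ x, (Set.Ioo (-s) s).indicator (fun _ => (1:ℝ)) x ∂ν = 2 * F s - 1 := by
      intro s hs
      rw [integral_indicator_const (1:ℝ) measurableSet_Ioo, smul_eq_mul, mul_one, measureReal_def, hIoo s hs]
    have hinteg : ∀ s : ℝ, Integrable ((Set.Ioo (-s) s).indicator (fun _ => (1:ℝ))) ν :=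
      fun s => (integrable_const 1).indicator measurableSet_Ioo
    have h2 : Integrable (fun x : ℝ => (Set.Ioo (-c) c).indicator (fun _ => (1:ℝ)) x -
        (Set.Ioo (-b) b).indicator (fun _ => (1:ℝ)) x) ν := (hinteg c).sub (hinteg b)
    have h3 : Integrable (fun x : ℝ => a / (c - b) * ((Set.Ioo (-c) c).indicator
        (fun _ => (1:ℝ)) x - (Set.Ioo (-b) b).indicator (fun _ => (1:ℝ)) x)) ν :=
      h2.const_mul _
    simp_rw [hampelD_eq_indicator]
    rw [integral_sub (hinteg a) h3, integral_const_mul _ _,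
      integral_sub (hinteg c) (hinteg b), hind a ha, hind c hc0, hind b hb]
    ring
  exact ⟨part1, hDval ▸ main.2⟩
end

section
/- Let f be a probability density on ℝ satisfying f(−x) = f(x) for all x and such that f is strictly decreasing on [0, ∞), and let F(x) = ∫_{−∞}^x f(u) du be the associated cumulative distribution function. Then for all real numbers 0 < a ≤ b < c one has 2F(a) − 1 − 2a·(F(c) − F(b))/(c − b) > 0. -/
open MeasureTheory

/-- If `f` is a symmetric probability density on `ℝ` that is strictly decreasing
on `[0, ∞)`, with cdf `F(x) = ∫_{−∞}^x f`, then for all `0 < a ≤ b < c` the Hampel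
Fisher-consistency constant `2F(a) − 1 − 2a(F(c) − F(b))/(c − b)` is strictly positive. -/
theorem hampel_constant_pos
    (f : ℝ → ℝ) (hf0 : ∀ x : ℝ, 0 ≤ f x) (hfint : Integrable f (volume : Measure ℝ))
    (hf1 : (∫ x : ℝ, f x) = 1)
    (hsym : ∀ x : ℝ, f (-x) = f x)
    (hdec : StrictAntiOn f (Set.Ici (0 : ℝ)))
    (F : ℝ → ℝ) (hF : ∀ x : ℝ, F x = ∫ u in Set.Iic x, f u) :
    ∀ a b c : ℝ, 0 < a → a ≤ b → b < c →
      0 < 2 * F a - 1 - 2 * a * (F c - F b) / (c - b) := by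
  intro a b c ha hab hbc
  have hanti : AntitoneOn f (Set.Ici (0 : ℝ)) := hdec.antitoneOn
  have hIOn : ∀ s : Set ℝ, IntegrableOn f s := fun s => hfint.integrableOn
  -- F y - F x = ∫ over Ioc x y
  have hdiff : ∀ x y : ℝ, x ≤ y → F y - F x = ∫ u in Set.Ioc x y, f u := by
    intro x y hxy
    rw [hF, hF, intervalIntegral.integral_Iic_sub_Iic (hIOn _) (hIOn _),
      intervalIntegral.integral_of_le hxy]
  -- F 0 = 1/2
  have hF0 : F 0 = 1 / 2 := by
    have hsum : (∫ x in Set.Iic (0:ℝ), f x) + ∫ x in Set.Ioi (0:ℝ), f x = 1 := by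
      rw [intervalIntegral.integral_Iic_add_Ioi (hIOn _) (hIOn _), hf1]
    have heq : (∫ x in Set.Ioi (0:ℝ), f x) = ∫ x in Set.Iic (0:ℝ), f x := by
      have : (∫ x in Set.Ioi (0:ℝ), f (-x)) = ∫ x in Set.Iic (-(0:ℝ)), f x :=
        integral_comp_neg_Ioi 0 f
      simpa [hsym] using this
    rw [hF]
    rw [heq] at hsum
    linarith
  -- lower bound: for 0 ≤ x ≤ y, (y - x) * f y ≤ ∫ over Ioc x y
  have hlow : ∀ x y : ℝ, 0 ≤ x → x ≤ y → (y - x) * f y ≤ ∫ u in Set.Ioc x y, f u := by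
    intro x y hx hxy
    have h1 : (∫ _ in Set.Ioc x y, f y) ≤ ∫ u in Set.Ioc x y, f u := by
      apply setIntegral_mono_on (by simp) (hIOn _) measurableSet_Ioc
      intro u hu
      exact hanti (Set.mem_Ici.mpr (le_trans hx hu.1.le)) (Set.mem_Ici.mpr (le_trans hx hxy))
        hu.2
    rwa [setIntegral_const, Real.volume_real_Ioc_of_le (by linarith),
      smul_eq_mul] at h1
  -- upper bound: for 0 ≤ x ≤ y, ∫ over Ioc x y ≤ (y - x) * f x
  have hupp : ∀ x y : ℝ, 0 ≤ x → x ≤ y → (∫ u in Set.Ioc x y, f u) ≤ (y - x) * f x := by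
    intro x y hx hxy
    have h1 : (∫ u in Set.Ioc x y, f u) ≤ ∫ _ in Set.Ioc x y, f x := by
      apply setIntegral_mono_on (hIOn _) (by simp) measurableSet_Ioc
      intro u hu
      exact hanti (Set.mem_Ici.mpr hx) (Set.mem_Ici.mpr (le_trans hx hu.1.le)) hu.1.le
    rwa [setIntegral_const, Real.volume_real_Ioc_of_le (by linarith),
      smul_eq_mul] at h1
  have hb0 : (0:ℝ) ≤ b := le_trans ha.le hab
  -- key quantities
  have hS1 : (a / 2) * f (a / 2) ≤ F (a/2) - F 0 := by
    rw [hdiff 0 (a/2) (by linarith)]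
    simpa using hlow 0 (a/2) le_rfl (by linarith)
  have hS2 : (a / 2) * f a ≤ F a - F (a/2) := by
    rw [hdiff (a/2) a (by linarith)]
    have := hlow (a/2) a (by linarith) (by linarith)
    have h2 : a - a/2 = a/2 := by ring
    rwa [h2] at this
  have hT : F c - F b ≤ (c - b) * f b := by
    rw [hdiff b c hbc.le]
    exact hupp b c hb0 hbc.le
  have hfba : f b ≤ f a := hanti (Set.mem_Ici.mpr ha.le) (Set.mem_Ici.mpr hb0) hab
  have hlt : f a < f (a / 2) := hdec (Set.mem_Ici.mpr (by linarith)) (Set.mem_Ici.mpr ha.le)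
    (by linarith)
  -- 2 a (F c - F b)/(c-b) ≤ 2 a f b
  have hcb : (0:ℝ) < c - b := by linarith
  have hdivle : 2 * a * (F c - F b) / (c - b) ≤ 2 * (a * f b) := by
    rw [div_le_iff₀ hcb]
    calc 2 * a * (F c - F b) ≤ 2 * a * ((c - b) * f b) := by
          apply mul_le_mul_of_nonneg_left hT (by linarith)
      _ = 2 * (a * f b) * (c - b) := by ring
  have hmul1 : a * f b ≤ a * f a := mul_le_mul_of_nonneg_left hfba ha.le
  have hmul2 : a * f a < a * f (a/2) := by
    exact mul_lt_mul_of_pos_left hlt ha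
  have h2F : a * f (a/2) + a * f a ≤ 2 * F a - 1 := by
    have : (a/2) * f (a/2) + (a/2) * f a ≤ F a - F 0 := by linarith
    rw [hF0] at this
    linarith
  linarith
end

section
/- Let ε be a real random variable on a probability space, ψ : ℝ → ℝ Borel measurable, and M > 0, h₀ > 0 constants such that for every u with |u| ≤ h₀ the random variable ψ(ε + u) − ψ(ε) is square integrable with E[ |ψ(ε + u) − ψ(ε)|² ] ≤ M·|u|. Then for all real a ≤ b with |a| ≤ h₀ and |b| ≤ h₀, assuming the map (ω, u) ↦ ψ(ε(ω) + u) − ψ(ε(ω)) is integrable on Ω × [a, b], one has E[ ( ∫_a^b ( ψ(ε + u) − ψ(ε) ) du )² ] ≤ M·(b − a)·∫_a^b |u| du. -/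
open MeasureTheory

/-- Cauchy–Schwarz for integrals on a finite measure space:
`(∫ f)² ≤ ν(univ) · ∫ f²`. -/
lemma cauchy_schwarz_integral_sq {α : Type*} [MeasurableSpace α] (ν : Measure α)
    [IsFiniteMeasure ν] (f : α → ℝ) (hf : Integrable f ν)
    (hf2 : Integrable (fun x => f x ^ 2) ν) :
    (∫ x, f x ∂ν) ^ 2 ≤ (ν Set.univ).toReal * ∫ x, f x ^ 2 ∂ν := by
  set T := (ν Set.univ).toReal with hT
  set c := ∫ x, f x ∂ν with hc
  have hT0 : 0 ≤ T := ENNReal.toReal_nonneg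
  rcases eq_or_lt_of_le hT0 with h0 | hpos
  · have huniv : ν Set.univ = 0 := by
      rcases (ENNReal.toReal_eq_zero_iff _).1 h0.symm with h | h
      · exact h
      · exact absurd h (measure_ne_top ν _)
    have hν0 : ν = 0 := Measure.measure_univ_eq_zero.1 huniv
    simp [hc, hν0]
  · have key : 0 ≤ ∫ x, (T * f x - c) ^ 2 ∂ν := integral_nonneg fun x => sq_nonneg _
    have expand : ∫ x, (T * f x - c) ^ 2 ∂ν
        = T ^ 2 * (∫ x, f x ^ 2 ∂ν) - 2 * T * c * c + c ^ 2 * T := by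
      have h1 : ∀ x, (T * f x - c) ^ 2 = T ^ 2 * f x ^ 2 - 2 * T * c * f x + c ^ 2 := by
        intro x; ring
      simp_rw [h1]
      rw [integral_add (μ := ν) (f := fun x => T ^ 2 * f x ^ 2 - 2 * T * c * f x)
          (g := fun _ => c ^ 2) ((hf2.const_mul _).sub (hf.const_mul _)) (integrable_const _),
        integral_sub (μ := ν) (f := fun x => T ^ 2 * f x ^ 2) (g := fun x => 2 * T * c * f x)
          (hf2.const_mul _) (hf.const_mul _),
        integral_const_mul, integral_const_mul, integral_const]
      simp only [smul_eq_mul, measureReal_def, ← hc, ← hT]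
      ring
    rw [expand] at key
    nlinarith [key, hpos]

/-- If `E[|ψ(ε + u) − ψ(ε)|²] ≤ M|u|` for all `|u| ≤ h₀`, then for `a ≤ b` with
`|a|, |b| ≤ h₀`, assuming joint integrability on `Ω × [a, b]`,
`E[(∫_a^b (ψ(ε + u) − ψ(ε)) du)²] ≤ M(b − a)·∫_a^b |u| du`. -/
theorem second_moment_integral_bound
    {Ω : Type*} [MeasurableSpace Ω] (μ : Measure Ω) [IsProbabilityMeasure μ]
    (ψ : ℝ → ℝ) (hψ : Measurable ψ)
    (ε : Ω → ℝ) (hε : Measurable ε)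
    (M h₀ : ℝ) (hM : 0 < M) (hh₀ : 0 < h₀)
    (hsq : ∀ u : ℝ, |u| ≤ h₀ →
      Integrable (fun ω => (ψ (ε ω + u) - ψ (ε ω)) ^ 2) μ ∧
      (∫ ω, (ψ (ε ω + u) - ψ (ε ω)) ^ 2 ∂μ) ≤ M * |u|)
    (a b : ℝ) (hab : a ≤ b) (ha : |a| ≤ h₀) (hb : |b| ≤ h₀)
    (hprod : Integrable (fun p : Ω × ℝ => ψ (ε p.1 + p.2) - ψ (ε p.1))
      (μ.prod ((volume : Measure ℝ).restrict (Set.Icc a b)))) :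
    (∫ ω, (∫ u in a..b, (ψ (ε ω + u) - ψ (ε ω))) ^ 2 ∂μ)
      ≤ M * (b - a) * ∫ u in a..b, |u| := by
  set ν : Measure ℝ := (volume : Measure ℝ).restrict (Set.Icc a b) with hνdef
  haveI hfin : IsFiniteMeasure ν := by
    constructor
    rw [hνdef, Measure.restrict_apply_univ, Real.volume_Icc]
    exact ENNReal.ofReal_lt_top
  set f : Ω → ℝ → ℝ := fun ω u => ψ (ε ω + u) - ψ (ε ω) with hfdef
  -- measurability of the uncurried function
  have hFm : Measurable (Function.uncurry f) :=
    (hψ.comp ((hε.comp measurable_fst).add measurable_snd)).sub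
      (hψ.comp (hε.comp measurable_fst))
  have hF2m : Measurable (fun p : Ω × ℝ => f p.1 p.2 ^ 2) := hFm.pow_const 2
  -- a.e. point of ν lies in Icc a b, hence |u| ≤ h₀
  have habs : ∀ u ∈ Set.Icc a b, |u| ≤ h₀ := by
    intro u hu
    rcases abs_le.1 ha with ⟨ha1, _⟩
    rcases abs_le.1 hb with ⟨_, hb2⟩
    exact abs_le.2 ⟨le_trans ha1 hu.1, le_trans hu.2 hb2⟩
  have hae : ∀ᵐ u ∂ν, u ∈ Set.Icc a b := ae_restrict_mem measurableSet_Icc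
  -- the square is integrable on the product
  have hF2int : Integrable (fun p : Ω × ℝ => f p.1 p.2 ^ 2) (μ.prod ν) := by
    rw [integrable_prod_iff' hF2m.aestronglyMeasurable]
    constructor
    · filter_upwards [hae] with u hu
      exact (hsq u (habs u hu)).1
    · have hms : StronglyMeasurable (fun u => ∫ ω, ‖f ω u ^ 2‖ ∂μ) :=
        (hF2m.norm).stronglyMeasurable.integral_prod_left'
      refine Integrable.mono' (integrable_const (M * h₀)) hms.aestronglyMeasurable ?_
      filter_upwards [hae] with u hu
      have heq : (fun ω => ‖f ω u ^ 2‖) = fun ω => f ω u ^ 2 := by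
        funext ω
        rw [Real.norm_eq_abs, abs_of_nonneg (sq_nonneg _)]
      rw [Real.norm_eq_abs, heq,
        abs_of_nonneg (integral_nonneg fun ω => sq_nonneg _)]
      calc (∫ ω, f ω u ^ 2 ∂μ) ≤ M * |u| := (hsq u (habs u hu)).2
        _ ≤ M * h₀ := by
          exact mul_le_mul_of_nonneg_left (habs u hu) hM.le
  -- total mass
  have hmass : (ν Set.univ).toReal = b - a := by
    rw [hνdef, Measure.restrict_apply_univ, Real.volume_Icc,
      ENNReal.toReal_ofReal (sub_nonneg.2 hab)]
  -- interval integrals equal ν-integrals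
  have hmeq : (volume : Measure ℝ).restrict (Set.Ioc a b) = ν :=
    Measure.restrict_congr_set MeasureTheory.Ioc_ae_eq_Icc
  have hinterval : ∀ g : ℝ → ℝ, (∫ u in a..b, g u) = ∫ u, g u ∂ν := by
    intro g
    rw [intervalIntegral.integral_of_le hab]
    show (∫ u, g u ∂((volume : Measure ℝ).restrict (Set.Ioc a b))) = _
    rw [hmeq]
  -- pointwise Cauchy–Schwarz, a.e. ω
  have hCS : ∀ᵐ ω ∂μ, (∫ u in a..b, f ω u) ^ 2 ≤ (b - a) * ∫ u, f ω u ^ 2 ∂ν := by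
    filter_upwards [hprod.prod_right_ae, hF2int.prod_right_ae] with ω h1 h2
    rw [hinterval (f ω)]
    calc (∫ u, f ω u ∂ν) ^ 2 ≤ (ν Set.univ).toReal * ∫ u, f ω u ^ 2 ∂ν :=
          cauchy_schwarz_integral_sq ν (f ω) h1 h2
      _ = (b - a) * ∫ u, f ω u ^ 2 ∂ν := by rw [hmass]
  -- the dominating function is integrable
  have hdom : Integrable (fun ω => (b - a) * ∫ u, f ω u ^ 2 ∂ν) μ :=
    (hF2int.integral_prod_left).const_mul (b - a)
  calc (∫ ω, (∫ u in a..b, f ω u) ^ 2 ∂μ)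
      ≤ ∫ ω, (b - a) * ∫ u, f ω u ^ 2 ∂ν ∂μ :=
        integral_mono_of_nonneg (Filter.Eventually.of_forall fun ω => sq_nonneg _) hdom hCS
    _ = (b - a) * ∫ ω, ∫ u, f ω u ^ 2 ∂ν ∂μ := integral_const_mul _ _
    _ = (b - a) * ∫ u, ∫ ω, f ω u ^ 2 ∂μ ∂ν := by
        rw [integral_integral_swap hF2int]
    _ ≤ (b - a) * ∫ u, M * |u| ∂ν := by
        refine mul_le_mul_of_nonneg_left ?_ (sub_nonneg.2 hab)
        refine integral_mono_ae hF2int.integral_prod_right ?_ ?_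
        · have : IntegrableOn (fun u : ℝ => M * |u|) (Set.Icc a b) volume :=
            (continuous_const.mul continuous_abs).integrableOn_Icc
          exact this
        · filter_upwards [hae] with u hu
          exact (hsq u (habs u hu)).2
    _ = M * (b - a) * ∫ u in a..b, |u| := by
        rw [hinterval (fun u => |u|)]
        rw [integral_const_mul]
        ring
end
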